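/- arXiv:2402.17075 — 3 statements merged into one kernel-verified Lean document; each statement's English description precedes it below -/
import Mathlib

section
/- Let λ < 1/4, β^± = -1/2 ± √(1-4λ)/2, and let δ > 0 satisfy δ < β⁺ - γ and δ < γ - β⁻ for some γ ∈ (β⁻, β⁺). Suppose g : [R₁, ∞) → ℝ is continuous with |g(s)| ≤ M e^{γ s}, and for R₁ ≤ R₂ define w(s) := -e^{β⁻ s} ∫_{R₁}^{R₂} e^{(β⁺-β⁻)r} ∫_r^∞ e^{-β⁺ t} g(t) dt dr for s ≥ R₂. Then |w(s)| ≤ C (R₂ - R₁) M e^{γ s} for all s ≥ R₂, with C depending only on γ - β⁻ and β⁺ - γ. -/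
/-!
With `|g t| ≤ M e^{γ t}` and `γ < β⁺`, the tail integral `∫_r^∞ e^{-β⁺ t} g t dt` is bounded by
`M e^{(γ - β⁺) r} / (β⁺ - γ)`, so the outer integrand is at most `M e^{(γ - β⁻) r} / (β⁺ - γ)`.
Since `γ ≥ β⁻` this grows in `r`, so on `[R₁, R₂]` it is at most its value at `R₂`, and the outer
integral is at most `(R₂ - R₁)` times that. Finally `e^{β⁻ s} e^{(γ - β⁻) R₂} ≤ e^{γ s}` for `s ≥ R₂`.
-/

open MeasureTheory Real Set

lemma abs_integral_Ici_exp_mul_le {β γ M r : ℝ} {g : ℝ → ℝ} (hγβ : γ < β)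
    (hg : ∀ t ≥ r, |g t| ≤ M * exp (γ * t)) :
    |∫ t in Ici r, exp (-β * t) * g t| ≤ M * exp ((γ - β) * r) / (β - γ) := by
  rw [integral_Ici_eq_integral_Ioi]
  have hdom : ∀ᵐ t ∂volume.restrict (Ioi r), ‖exp (-β * t) * g t‖ ≤ M * exp ((γ - β) * t) := by
    refine (ae_restrict_iff' measurableSet_Ioi).2 (.of_forall fun t ht => ?_)
    calc ‖exp (-β * t) * g t‖ = exp (-β * t) * |g t| := by
          rw [norm_mul, norm_of_nonneg (exp_pos _).le, norm_eq_abs]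
      _ ≤ exp (-β * t) * (M * exp (γ * t)) := by gcongr; exact hg t ht.le
      _ = M * exp ((γ - β) * t) := by rw [mul_left_comm, ← exp_add]; ring_nf
  calc _ ≤ ∫ t in Ioi r, M * exp ((γ - β) * t) :=
        norm_integral_le_of_norm_le ((integrableOn_exp_mul_Ioi (by linarith) r).const_mul M) hdom
    _ = M * exp ((γ - β) * r) / (β - γ) := by
        rw [integral_const_mul, integral_exp_mul_Ioi (by linarith), neg_div, ← div_neg, neg_sub,
          mul_div_assoc]

lemma abs_exp_mul_integral_Ici_exp_mul_le {βm βp γ M r : ℝ} {g : ℝ → ℝ} (hγ : γ < βp)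
    (hg : ∀ t ≥ r, |g t| ≤ M * exp (γ * t)) :
    |exp ((βp - βm) * r) * ∫ t in Ici r, exp (-βp * t) * g t| ≤
      M * exp ((γ - βm) * r) / (βp - γ) := by
  calc _ = exp ((βp - βm) * r) * |∫ t in Ici r, exp (-βp * t) * g t| := by
        rw [abs_mul, abs_exp]
    _ ≤ exp ((βp - βm) * r) * (M * exp ((γ - βp) * r) / (βp - γ)) := by
        gcongr; exact abs_integral_Ici_exp_mul_le hγ hg
    _ = M * exp ((γ - βm) * r) / (βp - γ) := by
        rw [mul_div_assoc', mul_left_comm, ← exp_add]; ring_nf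

lemma abs_exp_mul_integral_variation_le {βm βp γ M R₁ R₂ s : ℝ} {g : ℝ → ℝ}
    (hβm : βm ≤ γ) (hβp : γ < βp) (hR : R₁ ≤ R₂) (hs : R₂ ≤ s)
    (hg : ∀ t ≥ R₁, |g t| ≤ M * exp (γ * t)) :
    |exp (βm * s) *
        ∫ r in R₁..R₂, exp ((βp - βm) * r) * ∫ t in Ici r, exp (-βp * t) * g t| ≤
      (R₂ - R₁) * M * exp (γ * s) / (βp - γ) := by
  have hM : 0 ≤ M := nonneg_of_mul_nonneg_left ((abs_nonneg _).trans (hg R₁ le_rfl)) (exp_pos _)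
  have hintegrand : ∀ r ∈ uIoc R₁ R₂,
      ‖exp ((βp - βm) * r) * ∫ t in Ici r, exp (-βp * t) * g t‖ ≤
        M * exp ((γ - βm) * R₂) / (βp - γ) := by
    intro r hr
    rw [uIoc_of_le hR] at hr
    calc _ ≤ M * exp ((γ - βm) * r) / (βp - γ) :=
          abs_exp_mul_integral_Ici_exp_mul_le hβp fun t ht => hg t (hr.1.le.trans ht)
      _ ≤ M * exp ((γ - βm) * R₂) / (βp - γ) := by
          have : 0 < βp - γ := sub_pos.2 hβp
          gcongr
          nlinarith [hr.2]
  have hexp : exp (βm * s) * exp ((γ - βm) * R₂) ≤ exp (γ * s) := by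
    rw [← exp_add]
    exact exp_le_exp.2 (by nlinarith)
  calc _ = exp (βm * s) * ‖∫ r in R₁..R₂, exp ((βp - βm) * r) *
        ∫ t in Ici r, exp (-βp * t) * g t‖ := by rw [abs_mul, abs_exp, norm_eq_abs]
    _ ≤ exp (βm * s) * (M * exp ((γ - βm) * R₂) / (βp - γ) * |R₂ - R₁|) := by
        gcongr; exact intervalIntegral.norm_integral_le_of_norm_le_const hintegrand
    _ = (R₂ - R₁) * M * (exp (βm * s) * exp ((γ - βm) * R₂)) / (βp - γ) := by
        rw [abs_of_nonneg (sub_nonneg.2 hR)]; ring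
    _ ≤ (R₂ - R₁) * M * exp (γ * s) / (βp - γ) := by
        have : 0 < βp - γ := by linarith
        have : 0 ≤ R₂ - R₁ := sub_nonneg.2 hR
        gcongr

theorem stmt7_general (βm βp γ δ : ℝ)
    (hδ : 0 < δ) (hδ1 : δ < βp - γ) (hδ2 : δ < γ - βm) :
    ∃ C > 0, ∀ (R₁ R₂ M : ℝ) (g : ℝ → ℝ), R₁ ≤ R₂ →
      ContinuousOn g (Set.Ici R₁) →
      (∀ s ≥ R₁, |g s| ≤ M * Real.exp (γ * s)) →
      ∀ w : ℝ → ℝ,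
        (∀ s, w s = -Real.exp (βm * s) *
          ∫ r in R₁..R₂, Real.exp ((βp - βm) * r) * ∫ t in Set.Ici r, Real.exp (-βp * t) * g t) →
        ∀ s ≥ R₂, |w s| ≤ C * (R₂ - R₁) * M * Real.exp (γ * s) := by
  refine ⟨1 / (βp - γ), one_div_pos.2 (by linarith), ?_⟩
  intro R₁ R₂ M g hR _ hg w hw s hs
  rw [hw s, neg_mul, abs_neg]
  calc _ ≤ (R₂ - R₁) * M * exp (γ * s) / (βp - γ) :=
        abs_exp_mul_integral_variation_le (by linarith) (by linarith) hR hs hg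
    _ = 1 / (βp - γ) * (R₂ - R₁) * M * exp (γ * s) := by ring

theorem stmt7 (lam βm βp γ δ : ℝ) (hlam : lam < 1/4)
    (hβm : βm = -(1/2) - Real.sqrt (1 - 4*lam)/2)
    (hβp : βp = -(1/2) + Real.sqrt (1 - 4*lam)/2)
    (hδ : 0 < δ) (hδ1 : δ < βp - γ) (hδ2 : δ < γ - βm) :
    ∃ C > 0, ∀ (R₁ R₂ M : ℝ) (g : ℝ → ℝ), R₁ ≤ R₂ →
      ContinuousOn g (Set.Ici R₁) →
      (∀ s ≥ R₁, |g s| ≤ M * Real.exp (γ * s)) →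
      ∀ w : ℝ → ℝ,
        (∀ s, w s = -Real.exp (βm * s) *
          ∫ r in R₁..R₂, Real.exp ((βp - βm) * r) * ∫ t in Set.Ici r, Real.exp (-βp * t) * g t) →
        ∀ s ≥ R₂, |w s| ≤ C * (R₂ - R₁) * M * Real.exp (γ * s) :=
  stmt7_general βm βp γ δ hδ hδ1 hδ2
end

section
/- Let σ ∈ (0,1), let h : S¹ → (0,∞) be continuous, and for i = 1,2 let S_i : [l₀,∞) × S¹ → ℝ be functions, concave and strictly increasing in l for each fixed θ, satisfying S_i(l,θ) = σ⁻¹ l^σ h(θ) + o(l^σ) uniformly in θ as l → ∞. Then ∂_l S_i(l,θ) = l^{σ-1} h(θ) + o(l^{σ-1}) uniformly in θ as l → ∞, and consequently for each fixed δ > 0, S_1(l-δ, θ) - S_1(l,θ) = -δ l^{σ-1} h(θ) + o(l^{σ-1}) uniformly in θ as l → ∞. -/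
/-! For a function concave in `l`, the derivative at `l` lies between the difference quotients
over `[(1 - η) l, l]` and `[l, (1 + η) l]`. By the uniform `C⁰` asymptotics these quotients are
`l ^ (σ - 1) h θ` times the difference quotients of `x ↦ σ⁻¹ x ^ σ` at `1`, up to an error
`O(ε / η) l ^ (σ - 1)`; taking `η` small first and then `ε` small gives the derivative asymptotics.
The second claim uses the same sandwich `S'(l) ≤ (S(l) - S(l - δ)) / δ ≤ S'(l - δ)` together with
`(l - δ) ^ (σ - 1) / l ^ (σ - 1) → 1`. -/

open Filter Set Topology

lemma ConcaveOn.abs_deriv_sub_le_max {f : ℝ → ℝ} {s : Set ℝ} {a x b : ℝ} (hf : ConcaveOn ℝ s f)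
    (ha : a ∈ s) (hx : x ∈ s) (hb : b ∈ s) (hax : a < x) (hxb : x < b)
    (hd : DifferentiableAt ℝ f x) (m : ℝ) :
    |deriv f x - m| ≤ max |slope f x b - m| |slope f x a - m| := by
  rw [slope_comm f x a]
  exact abs_le_max_abs_abs (sub_le_sub_right (hf.slope_le_deriv hx hb hxb hd) m)
    (sub_le_sub_right (hf.deriv_le_slope ha hx hax hd) m)

lemma ConcaveOn.abs_slope_sub_le_max {f : ℝ → ℝ} {s : Set ℝ} {a b : ℝ} (hf : ConcaveOn ℝ s f)
    (ha : a ∈ s) (hb : b ∈ s) (hab : a < b) (hda : DifferentiableAt ℝ f a)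
    (hdb : DifferentiableAt ℝ f b) (m : ℝ) :
    |slope f a b - m| ≤ max |deriv f b - m| |deriv f a - m| :=
  abs_le_max_abs_abs (sub_le_sub_right (hf.deriv_le_slope ha hb hab hdb) m)
    (sub_le_sub_right (hf.slope_le_deriv ha hb hab hda) m)

lemma slope_rpow_mul (σ : ℝ) {l u v : ℝ} (hl : 0 < l) (hu : 0 ≤ u) (hv : 0 ≤ v) :
    slope (· ^ σ) (l * u) (l * v) = l ^ (σ - 1) * slope (· ^ σ) u v := by
  simp only [slope_def_field, Real.mul_rpow hl.le hu, Real.mul_rpow hl.le hv,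
    Real.rpow_sub_one hl.ne']
  rcases eq_or_ne u v with rfl | huv
  · simp
  · field_simp [sub_ne_zero.2 huv.symm]

lemma abs_slope_sub_rpow_le {f : ℝ → ℝ} {σ c e l t : ℝ} (hl : 0 < l) (ht : t ≠ 0) (ht1 : -1 ≤ t)
    (h₀ : |f l - σ⁻¹ * l ^ σ * c| ≤ e * l ^ σ)
    (h₁ : |f (l * (1 + t)) - σ⁻¹ * (l * (1 + t)) ^ σ * c| ≤ e * (l * (1 + t)) ^ σ) :
    |slope f l (l * (1 + t)) - l ^ (σ - 1) * c| ≤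
      (|c| * |σ⁻¹ * slope (· ^ σ) 1 (1 + t) - 1| + (1 + (1 + t) ^ σ) * e / |t|) * l ^ (σ - 1) := by
  set D₀ := f l - σ⁻¹ * l ^ σ * c
  set D₁ := f (l * (1 + t)) - σ⁻¹ * (l * (1 + t)) ^ σ * c
  have hmodel := slope_rpow_mul σ hl zero_le_one (by linarith : 0 ≤ 1 + t)
  rw [mul_one] at hmodel
  have hlt : l * (1 + t) - l = l * t := by ring
  have hsplit : slope f l (l * (1 + t)) - l ^ (σ - 1) * c =
      l ^ (σ - 1) * (c * (σ⁻¹ * slope (· ^ σ) 1 (1 + t) - 1)) + (D₁ - D₀) / (l * t) := by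
    have : slope f l (l * (1 + t)) =
        σ⁻¹ * c * slope (· ^ σ) l (l * (1 + t)) + (D₁ - D₀) / (l * t) := by
      simp only [slope_def_field, hlt, D₀, D₁]
      field_simp
      ring
    rw [this, hmodel]
    ring
  have hlσ : l ^ σ = l ^ (σ - 1) * l := by rw [Real.rpow_sub_one hl.ne']; field_simp
  have hD : |(D₁ - D₀) / (l * t)| ≤ (1 + (1 + t) ^ σ) * e / |t| * l ^ (σ - 1) := by
    rw [abs_div, abs_mul, abs_of_pos hl, div_le_iff₀ (by positivity)]
    calc |D₁ - D₀| ≤ |D₁| + |D₀| := abs_sub _ _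
      _ ≤ e * (l * (1 + t)) ^ σ + e * l ^ σ := add_le_add h₁ h₀
      _ = (1 + (1 + t) ^ σ) * e / |t| * l ^ (σ - 1) * (l * |t|) := by
        rw [Real.mul_rpow hl.le (by linarith), hlσ]
        field_simp
        ring
  rw [hsplit, add_mul]
  refine (abs_add_le _ _).trans (add_le_add ?_ hD)
  rw [abs_mul, abs_mul, abs_of_pos (Real.rpow_pos_of_pos hl _)]
  exact le_of_eq (mul_comm _ _)

lemma exists_abs_inv_mul_slope_rpow_sub_one_le {σ κ : ℝ} (hσ : σ ≠ 0) (hκ : 0 < κ) :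
    ∃ η ∈ Ioo (0 : ℝ) 1, ∀ t, |t| = η → |σ⁻¹ * slope (· ^ σ) 1 (1 + t) - 1| ≤ κ := by
  have hslope : Tendsto (fun x : ℝ => σ⁻¹ * slope (· ^ σ) 1 x) (𝓝[≠] 1) (𝓝 1) := by
    have := hasDerivAt_iff_tendsto_slope.1
      (Real.hasDerivAt_rpow_const (p := σ) (Or.inl one_ne_zero))
    simpa [inv_mul_cancel₀ hσ] using this.const_mul σ⁻¹
  obtain ⟨δ, hδ, hclose⟩ := Metric.tendsto_nhdsWithin_nhds.1 hslope κ hκ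
  have hη : 0 < min (δ / 2) (1 / 2) := by positivity
  refine ⟨min (δ / 2) (1 / 2), ⟨hη, by linarith [min_le_right (δ / 2) (1 / 2)]⟩, fun t ht => ?_⟩
  have ht0 : t ≠ 0 := by rintro rfl; rw [abs_zero] at ht; exact hη.ne ht
  refine (hclose (by simpa using ht0) ?_).le
  rw [Real.dist_eq, add_sub_cancel_left, ht]
  linarith [min_le_left (δ / 2) (1 / 2)]

lemma eventually_abs_rpow_sub_sub_rpow_le (p δ : ℝ) {η : ℝ} (hη : 0 < η) :
    ∀ᶠ l in atTop, |(l - δ) ^ p - l ^ p| ≤ η * l ^ p := by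
  have hratio : Tendsto (fun l => ((l - δ) / l) ^ p) atTop (𝓝 1) := by
    have h : Tendsto (fun l : ℝ => 1 - δ / l) atTop (𝓝 1) := by
      simpa using tendsto_const_nhds.sub (tendsto_const_nhds.div_atTop (tendsto_id (α := ℝ)))
    have := h.rpow_const (p := p) (Or.inl one_ne_zero)
    rw [Real.one_rpow] at this
    refine this.congr' ?_
    filter_upwards [eventually_ne_atTop 0] with l hl
    rw [one_sub_div hl]
  filter_upwards [Metric.tendsto_nhds.1 hratio η hη, eventually_gt_atTop δ,
    eventually_gt_atTop 0] with l hclose hδl hl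
  rw [Real.dist_eq, Real.div_rpow (by linarith) hl.le] at hclose
  have hlp : 0 < l ^ p := Real.rpow_pos_of_pos hl p
  rw [div_sub_one hlp.ne', abs_div, abs_of_pos hlp, div_lt_iff₀ hlp] at hclose
  exact hclose.le

section UniformAsymptotics

variable {Θ : Type*} {h : Θ → ℝ} {M l₀ : ℝ} {S : ℝ → Θ → ℝ}

theorem eventually_abs_comp_sub_sub_rpow_le {φ : ℝ → Θ → ℝ} {p : ℝ} (hM : ∀ θ, |h θ| ≤ M)
    (hφ : ∀ ε > 0, ∀ᶠ l in atTop, ∀ θ, |φ l θ - l ^ p * h θ| ≤ ε * l ^ p) (δ : ℝ) :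
    ∀ ε > 0, ∀ᶠ l in atTop, ∀ θ, |φ (l - δ) θ - l ^ p * h θ| ≤ ε * l ^ p := by
  intro ε hε
  set η := min 1 (ε / (2 * (|M| + 1)))
  have hη : 0 < η := lt_min one_pos (by positivity)
  have hφ' := (tendsto_atTop_add_const_right atTop (-δ) tendsto_id).eventually
    (hφ (ε / 4) (by positivity))
  filter_upwards [hφ', eventually_abs_rpow_sub_sub_rpow_le p δ hη, eventually_gt_atTop 0]
    with l hφl hpow hl θ
  simp only [id, ← sub_eq_add_neg] at hφl
  have hlp : 0 < l ^ p := Real.rpow_pos_of_pos hl p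
  have hMη : |h θ| * η ≤ ε / 2 := by
    calc |h θ| * η ≤ |M| * (ε / (2 * (|M| + 1))) :=
          mul_le_mul ((hM θ).trans (le_abs_self M)) (min_le_right _ _) hη.le (abs_nonneg M)
      _ ≤ ε / 2 := by
          rw [mul_div_assoc', div_le_div_iff₀ (by positivity) two_pos]
          nlinarith [abs_nonneg M]
  calc |φ (l - δ) θ - l ^ p * h θ|
      ≤ |φ (l - δ) θ - (l - δ) ^ p * h θ| + |(l - δ) ^ p * h θ - l ^ p * h θ| := abs_sub_le _ _ _
    _ = |φ (l - δ) θ - (l - δ) ^ p * h θ| + |h θ| * |(l - δ) ^ p - l ^ p| := by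
        rw [← sub_mul, abs_mul, mul_comm |_|]
    _ ≤ ε / 4 * ((1 + η) * l ^ p) + |h θ| * (η * l ^ p) := by
        gcongr
        exact (hφl θ).trans
          (mul_le_mul_of_nonneg_left (by linarith [(abs_le.1 hpow).2]) (by positivity))
    _ ≤ ε * l ^ p := by
        have : ε / 4 * (1 + η) ≤ ε / 2 := by
          nlinarith [min_le_left 1 (ε / (2 * (|M| + 1)))]
        nlinarith

theorem eventually_abs_deriv_sub_rpow_le {σ : ℝ} (hσ : 0 < σ) (hM : ∀ θ, |h θ| ≤ M)
    (hconc : ∀ θ, ConcaveOn ℝ (Ici l₀) (S · θ))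
    (hdiff : ∀ θ, ∀ l ≥ l₀, DifferentiableAt ℝ (S · θ) l)
    (hS : ∀ ε > 0, ∀ᶠ l in atTop, ∀ θ, |S l θ - σ⁻¹ * l ^ σ * h θ| ≤ ε * l ^ σ) :
    ∀ ε > 0, ∀ᶠ l in atTop, ∀ θ, |deriv (S · θ) l - l ^ (σ - 1) * h θ| ≤ ε * l ^ (σ - 1) := by
  intro ε hε
  obtain ⟨η, ⟨hη0, hη1⟩, hq⟩ :=
    exists_abs_inv_mul_slope_rpow_sub_one_le hσ.ne' (κ := ε / (2 * (|M| + 1))) (by positivity)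
  set e := η * ε / (2 * (1 + 2 ^ σ))
  have he : 0 < e := by positivity
  have hS_mul : ∀ t, -1 < t → ∀ᶠ l in atTop, ∀ θ,
      |S (l * (1 + t)) θ - σ⁻¹ * (l * (1 + t)) ^ σ * h θ| ≤ e * (l * (1 + t)) ^ σ :=
    fun t ht => (tendsto_id.atTop_mul_const (by linarith)).eventually (hS e he)
  filter_upwards [hS e he, hS_mul (-η) (by linarith), hS_mul η (by linarith),
    (tendsto_id.atTop_mul_const (by linarith : (0 : ℝ) < 1 + -η)).eventually
      (eventually_ge_atTop l₀), eventually_gt_atTop 0] with l h₀ hminus hplus hl₀ hl θ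
  have hside : ∀ t, |t| = η →
      |S (l * (1 + t)) θ - σ⁻¹ * (l * (1 + t)) ^ σ * h θ| ≤ e * (l * (1 + t)) ^ σ →
      |slope (S · θ) l (l * (1 + t)) - l ^ (σ - 1) * h θ| ≤ ε * l ^ (σ - 1) := by
    intro t ht hbound
    have ht0 : t ≠ 0 := by rintro rfl; rw [abs_zero] at ht; exact hη0.ne ht
    have htη := abs_le.1 ht.le
    refine (abs_slope_sub_rpow_le hl ht0 (by linarith) (h₀ θ) hbound).trans
      (mul_le_mul_of_nonneg_right ?_ (Real.rpow_nonneg hl.le _))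
    have hmodel : |h θ| * |σ⁻¹ * slope (· ^ σ) 1 (1 + t) - 1| ≤ ε / 2 := by
      calc |h θ| * |σ⁻¹ * slope (· ^ σ) 1 (1 + t) - 1| ≤ |M| * (ε / (2 * (|M| + 1))) :=
            mul_le_mul ((hM θ).trans (le_abs_self M)) (hq t ht) (abs_nonneg _) (abs_nonneg M)
        _ ≤ ε / 2 := by
            rw [mul_div_assoc', div_le_div_iff₀ (by positivity) two_pos]
            nlinarith [abs_nonneg M]
    have hpow : (1 + t) ^ σ ≤ 2 ^ σ :=
      Real.rpow_le_rpow (by linarith) (by linarith) hσ.le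
    have herror : (1 + (1 + t) ^ σ) * e / |t| ≤ ε / 2 := by
      rw [ht, div_le_iff₀ hη0]
      calc (1 + (1 + t) ^ σ) * e ≤ (1 + 2 ^ σ) * e := by gcongr
        _ = ε / 2 * η := by simp only [e]; field_simp
    linarith
  have hmem : ∀ t, -η ≤ t → l * (1 + t) ∈ Ici l₀ := fun t ht =>
    le_trans hl₀ (mul_le_mul_of_nonneg_left (by linarith) hl.le)
  have hl_mem : l ∈ Ici l₀ := by simpa using hmem 0 (by linarith)
  calc |deriv (S · θ) l - l ^ (σ - 1) * h θ|
      ≤ max |slope (S · θ) l (l * (1 + η)) - l ^ (σ - 1) * h θ|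
          |slope (S · θ) l (l * (1 + -η)) - l ^ (σ - 1) * h θ| :=
        (hconc θ).abs_deriv_sub_le_max (hmem (-η) le_rfl) hl_mem (hmem η (by linarith))
          (by nlinarith) (by nlinarith) (hdiff θ l hl_mem) _
    _ ≤ ε * l ^ (σ - 1) :=
        max_le (hside η (abs_of_pos hη0) (hplus θ)) (hside (-η) (by simp [hη0.le]) (hminus θ))

theorem eventually_abs_sub_sub_add_rpow_le {p δ : ℝ} (hδ : 0 < δ) (hM : ∀ θ, |h θ| ≤ M)
    (hconc : ∀ θ, ConcaveOn ℝ (Ici l₀) (S · θ))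
    (hdiff : ∀ θ, ∀ l ≥ l₀, DifferentiableAt ℝ (S · θ) l)
    (hS' : ∀ ε > 0, ∀ᶠ l in atTop, ∀ θ, |deriv (S · θ) l - l ^ p * h θ| ≤ ε * l ^ p) :
    ∀ ε > 0, ∀ᶠ l in atTop, ∀ θ, |S (l - δ) θ - S l θ + δ * l ^ p * h θ| ≤ ε * l ^ p := by
  intro ε hε
  filter_upwards [hS' (ε / δ) (by positivity),
    eventually_abs_comp_sub_sub_rpow_le hM hS' δ (ε / δ) (by positivity),
    eventually_ge_atTop (l₀ + δ)] with l hl hlδ hl₀ θ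
  have hslope : |slope (S · θ) (l - δ) l - l ^ p * h θ| ≤ ε / δ * l ^ p :=
    ((hconc θ).abs_slope_sub_le_max (mem_Ici.2 (by linarith)) (mem_Ici.2 (by linarith))
      (by linarith) (hdiff θ _ (by linarith)) (hdiff θ l (by linarith)) _).trans
      (max_le (hl θ) (hlδ θ))
  have hexpand : S (l - δ) θ - S l θ + δ * l ^ p * h θ =
      -δ * (slope (S · θ) (l - δ) l - l ^ p * h θ) := by
    rw [slope_def_field, sub_sub_cancel]
    field_simp
    ring
  rw [hexpand, abs_mul, abs_neg, abs_of_pos hδ]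
  calc δ * |slope (S · θ) (l - δ) l - l ^ p * h θ| ≤ δ * (ε / δ * l ^ p) := by gcongr
    _ = ε * l ^ p := by field_simp

end UniformAsymptotics

lemma Filter.Eventually.exists_ge_forall_ge {α : Type*} [SemilatticeSup α] [Nonempty α]
    {p : α → Prop} (h : ∀ᶠ x in atTop, p x) (a : α) : ∃ b ≥ a, ∀ x ≥ b, p x := by
  obtain ⟨b, hb⟩ := eventually_atTop.1 h
  exact ⟨b ⊔ a, le_sup_right, fun x hx => hb x (le_sup_left.trans hx)⟩

theorem stmt15_general (σ : ℝ) (hσ0 : 0 < σ) (h : ℝ → ℝ) (hcont : Continuous h)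
    (hper : ∀ θ, h (θ + 2*Real.pi) = h θ)
    (l₀ : ℝ) (S₁ S₂ : ℝ → ℝ → ℝ)
    (hconc : ∀ θ, ConcaveOn ℝ (Set.Ici l₀) (fun l => S₁ l θ) ∧
      ConcaveOn ℝ (Set.Ici l₀) (fun l => S₂ l θ))
    (hdiff : ∀ θ : ℝ, ∀ l ≥ l₀, DifferentiableAt ℝ (fun t => S₁ t θ) l ∧
      DifferentiableAt ℝ (fun t => S₂ t θ) l)
    (hasym : ∀ ε > 0, ∃ L ≥ l₀, ∀ l ≥ L, ∀ θ : ℝ,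
      |S₁ l θ - σ⁻¹ * l ^ σ * h θ| ≤ ε * l ^ σ ∧
      |S₂ l θ - σ⁻¹ * l ^ σ * h θ| ≤ ε * l ^ σ) :
    (∀ ε > 0, ∃ L ≥ l₀, ∀ l ≥ L, ∀ θ : ℝ,
      |deriv (fun t => S₁ t θ) l - l ^ (σ-1) * h θ| ≤ ε * l ^ (σ-1) ∧
      |deriv (fun t => S₂ t θ) l - l ^ (σ-1) * h θ| ≤ ε * l ^ (σ-1)) ∧
    ∀ δ > 0, ∀ ε > 0, ∃ L ≥ l₀, ∀ l ≥ L, ∀ θ : ℝ,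
      |S₁ (l - δ) θ - S₁ l θ + δ * l ^ (σ-1) * h θ| ≤ ε * l ^ (σ-1) := by
  obtain ⟨M, hM⟩ := isBounded_iff_forall_norm_le.1
    (Function.Periodic.isBounded_of_continuous hper Real.two_pi_pos.ne' hcont)
  have hM' : ∀ θ, |h θ| ≤ M := fun θ => hM _ ⟨θ, rfl⟩
  have hS₁ : ∀ ε > 0, ∀ᶠ l in atTop, ∀ θ, |S₁ l θ - σ⁻¹ * l ^ σ * h θ| ≤ ε * l ^ σ :=
    fun ε hε => let ⟨L, _, hL⟩ := hasym ε hε; eventually_atTop.2 ⟨L, fun l hl θ => (hL l hl θ).1⟩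
  have hS₂ : ∀ ε > 0, ∀ᶠ l in atTop, ∀ θ, |S₂ l θ - σ⁻¹ * l ^ σ * h θ| ≤ ε * l ^ σ :=
    fun ε hε => let ⟨L, _, hL⟩ := hasym ε hε; eventually_atTop.2 ⟨L, fun l hl θ => (hL l hl θ).2⟩
  have hS₁' := eventually_abs_deriv_sub_rpow_le hσ0 hM' (fun θ => (hconc θ).1)
    (fun θ l hl => (hdiff θ l hl).1) hS₁
  have hS₂' := eventually_abs_deriv_sub_rpow_le hσ0 hM' (fun θ => (hconc θ).2)
    (fun θ l hl => (hdiff θ l hl).2) hS₂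
  refine ⟨fun ε hε => ?_, fun δ hδ ε hε => ?_⟩
  · exact (((hS₁' ε hε).and (hS₂' ε hε)).mono fun l hl θ => ⟨hl.1 θ, hl.2 θ⟩).exists_ge_forall_ge l₀
  · exact (eventually_abs_sub_sub_add_rpow_le hδ hM' (fun θ => (hconc θ).1)
      (fun θ l hl => (hdiff θ l hl).1) hS₁' ε hε).exists_ge_forall_ge l₀

theorem stmt15 (σ : ℝ) (hσ0 : 0 < σ) (hσ1 : σ < 1) (h : ℝ → ℝ) (hcont : Continuous h)
    (hpos : ∀ θ, 0 < h θ) (hper : ∀ θ, h (θ + 2*Real.pi) = h θ)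
    (l₀ : ℝ) (hl₀ : 0 < l₀) (S₁ S₂ : ℝ → ℝ → ℝ)
    (hconc : ∀ θ, ConcaveOn ℝ (Set.Ici l₀) (fun l => S₁ l θ) ∧
      ConcaveOn ℝ (Set.Ici l₀) (fun l => S₂ l θ))
    (hmono : ∀ θ, StrictMonoOn (fun l => S₁ l θ) (Set.Ici l₀) ∧
      StrictMonoOn (fun l => S₂ l θ) (Set.Ici l₀))
    (hdiff : ∀ θ : ℝ, ∀ l ≥ l₀, DifferentiableAt ℝ (fun t => S₁ t θ) l ∧
      DifferentiableAt ℝ (fun t => S₂ t θ) l)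
    (hasym : ∀ ε > 0, ∃ L ≥ l₀, ∀ l ≥ L, ∀ θ : ℝ,
      |S₁ l θ - σ⁻¹ * l ^ σ * h θ| ≤ ε * l ^ σ ∧
      |S₂ l θ - σ⁻¹ * l ^ σ * h θ| ≤ ε * l ^ σ) :
    (∀ ε > 0, ∃ L ≥ l₀, ∀ l ≥ L, ∀ θ : ℝ,
      |deriv (fun t => S₁ t θ) l - l ^ (σ-1) * h θ| ≤ ε * l ^ (σ-1) ∧
      |deriv (fun t => S₂ t θ) l - l ^ (σ-1) * h θ| ≤ ε * l ^ (σ-1)) ∧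
    ∀ δ > 0, ∀ ε > 0, ∃ L ≥ l₀, ∀ l ≥ L, ∀ θ : ℝ,
      |S₁ (l - δ) θ - S₁ l θ + δ * l ^ (σ-1) * h θ| ≤ ε * l ^ (σ-1) :=
  stmt15_general σ hσ0 h hcont hper l₀ S₁ S₂ hconc hdiff hasym
end

section
/- Let λ < 1/4 with roots β⁻ < β⁺ of β² + β + λ = 0, let γ ∈ (β⁻, β⁺), and let δ := min(β⁺ - γ, γ - β⁻)/2 > 0. Suppose g : [R,∞) → ℝ is measurable with ∫_r^∞ e^{-2(γ+δ)t} g(t)² dt < ∞ for all r ≥ R and sup_{t≥R} e^{-γt}|g(t)| ≤ M. Then the function w defined by w(s) = -e^{β⁻ s} ∫_R^s e^{(β⁺-β⁻)r} ∫_r^∞ e^{-β⁺ t} g(t) dt dr satisfies the bound e^{-2γs} w(s)² ≤ (e^{-2δs} / (4(γ-β⁻-δ)(β⁺-γ-δ))) ∫_R^s e^{4δr} ∫_r^∞ e^{-2(γ+δ)t} g(t)² dt dr for all s ≥ R, and consequently sup_{s≥R} e^{-γs}|w(s)| ≤ C·M with C depending only on γ-β⁻, β⁺-γ, δ. -/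
/-!
Put u(r) = ∫_r^∞ e^{-β⁺t} g(t) dt. Writing e^{-β⁺t} = e^{-(β⁺-γ-δ)t} · e^{-(γ+δ)t}, Cauchy–Schwarz
on [r, ∞) bounds u(r)² by e^{-2(β⁺-γ-δ)r} / (2(β⁺-γ-δ)) times the weighted L² tail of g at r.
Writing e^{(β⁺-β⁻)r} = e^{(γ-β⁻-δ)r} · e^{(β⁺-γ+δ)r}, Cauchy–Schwarz on [R, s] then gives the
pointwise bound for w. For the uniform bound, |g(t)| ≤ M e^{γt} makes the tail at r at most
M² e^{-2δr} / (2δ), so the double integral grows like e^{2δs}, which cancels the factor e^{-2δs}.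
-/

open MeasureTheory Set Real Filter

theorem sq_integral_mul_le {α : Type*} [MeasurableSpace α] {μ : Measure α} {f g : α → ℝ}
    (hf : MemLp f 2 μ) (hg : MemLp g 2 μ) :
    (∫ a, f a * g a ∂μ) ^ 2 ≤ (∫ a, f a ^ 2 ∂μ) * ∫ a, g a ^ 2 ∂μ := by
  have inner_toLp {u v : α → ℝ} (hu : MemLp u 2 μ) (hv : MemLp v 2 μ) :
      inner ℝ (hu.toLp u) (hv.toLp v) = ∫ a, u a * v a ∂μ := by
    rw [L2.inner_def]
    refine integral_congr_ae ?_
    filter_upwards [hu.coeFn_toLp, hv.coeFn_toLp] with a hua hva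
    simp [hua, hva, mul_comm]
  have := real_inner_mul_inner_self_le (hf.toLp f) (hg.toLp g)
  simpa only [inner_toLp, sq] using this

theorem exp_mul_sq (c t : ℝ) : exp (c * t) ^ 2 = exp (2 * c * t) := by
  rw [← exp_nat_mul]; push_cast; ring_nf

theorem integral_exp_neg_mul_Ici {c : ℝ} (hc : 0 < c) (r : ℝ) :
    ∫ t in Ici r, exp (-c * t) = exp (-c * r) / c := by
  rw [integral_Ici_eq_integral_Ioi, integral_exp_mul_Ioi (by linarith)]
  field_simp

theorem integrableOn_exp_neg_mul_Ici {c : ℝ} (hc : 0 < c) (r : ℝ) :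
    IntegrableOn (fun t => exp (-c * t)) (Ici r) :=
  (integrableOn_Ici_iff_integrableOn_Ioi).mpr (integrableOn_exp_mul_Ioi (by linarith) r)

theorem setIntegral_exp_mul_Ioc_le {c : ℝ} (hc : 0 < c) (R s : ℝ) :
    ∫ r in Ioc R s, exp (c * r) ≤ exp (c * s) / c := by
  rw [← integral_exp_mul_Iic hc]
  exact setIntegral_mono_set (integrableOn_exp_mul_Iic hc s)
    (Eventually.of_forall fun r => (exp_pos _).le) (Eventually.of_forall Ioc_subset_Iic_self)

theorem memLp_exp_mul_of_integrableOn_exp_mul_sq {κ : ℝ} {h : ℝ → ℝ} (hh : Measurable h)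
    {S : Set ℝ}
    (hint : IntegrableOn (fun t => exp (-2 * κ * t) * h t ^ 2) S) :
    MemLp (fun t => exp (-κ * t) * h t) 2 (volume.restrict S) := by
  rw [memLp_two_iff_integrable_sq (by fun_prop)]
  refine hint.congr (ae_of_all _ fun t => ?_)
  simp only [mul_pow, exp_mul_sq]
  ring_nf

theorem memLp_exp_neg_mul_Ici {c : ℝ} (hc : 0 < c) (r : ℝ) :
    MemLp (fun t => exp (-c * t)) 2 (volume.restrict (Ici r)) := by
  rw [memLp_two_iff_integrable_sq (by fun_prop)]
  refine (integrableOn_exp_neg_mul_Ici (by linarith : 0 < 2 * c) r).congr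
    (ae_of_all _ fun t => ?_)
  simp only [exp_mul_sq]
  ring_nf

section WeightedTail

variable {β κ : ℝ} {h : ℝ → ℝ} {r : ℝ}

theorem integrableOn_exp_mul_Ici_of_sq (hκ : κ < β) (hh : Measurable h)
    (hint : IntegrableOn (fun t => exp (-2 * κ * t) * h t ^ 2) (Ici r)) :
    IntegrableOn (fun t => exp (-β * t) * h t) (Ici r) := by
  refine ((memLp_exp_neg_mul_Ici (sub_pos.2 hκ) r).integrable_mul
    (memLp_exp_mul_of_integrableOn_exp_mul_sq hh hint)).congr (ae_of_all _ fun t => ?_)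
  simp only [Pi.mul_apply, ← mul_assoc, ← exp_add]
  ring_nf

theorem sq_setIntegral_exp_mul_Ici_le (hκ : κ < β) (hh : Measurable h)
    (hint : IntegrableOn (fun t => exp (-2 * κ * t) * h t ^ 2) (Ici r)) :
    (∫ t in Ici r, exp (-β * t) * h t) ^ 2 ≤
      exp (-2 * (β - κ) * r) / (2 * (β - κ)) * ∫ t in Ici r, exp (-2 * κ * t) * h t ^ 2 := by
  have hcs := sq_integral_mul_le (memLp_exp_neg_mul_Ici (sub_pos.2 hκ) r)
    (memLp_exp_mul_of_integrableOn_exp_mul_sq hh hint)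
  have hsplit : ∀ t, exp (-(β - κ) * t) * (exp (-κ * t) * h t) = exp (-β * t) * h t := by
    intro t; rw [← mul_assoc, ← exp_add]; ring_nf
  have hv : ∀ t, (exp (-κ * t) * h t) ^ 2 = exp (-2 * κ * t) * h t ^ 2 := by
    intro t; rw [mul_pow, exp_mul_sq]; ring_nf
  have hu : ∫ t in Ici r, exp (-(β - κ) * t) ^ 2 = exp (-2 * (β - κ) * r) / (2 * (β - κ)) := by
    simp only [exp_mul_sq, mul_neg]
    rw [integral_exp_neg_mul_Ici (by linarith : 0 < 2 * (β - κ))]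
    ring_nf
  simpa only [hsplit, hv, hu] using hcs

end WeightedTail

theorem sq_setIntegral_exp_mul_Ioc_le {a b δ c R s : ℝ} (ha : 0 < a) (hb : 0 < b)
    (hc : a + b + 2 * δ = c) {I J : ℝ → ℝ}
    (hI : ContinuousOn I (Icc R s)) (hJ : ContinuousOn J (Icc R s))
    (hIJ : ∀ r ∈ Ioc R s, I r ^ 2 ≤ exp (-2 * b * r) / (2 * b) * J r) :
    (∫ r in Ioc R s, exp (c * r) * I r) ^ 2 ≤
      exp (2 * a * s) / (4 * a * b) * ∫ r in Ioc R s, exp (4 * δ * r) * J r := by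
  have hv : ContinuousOn (fun r => exp ((b + 2 * δ) * r) * I r) (Icc R s) := by fun_prop
  have hu2 : MemLp (fun r => exp (a * r)) 2 (volume.restrict (Ioc R s)) :=
    (memLp_two_iff_integrable_sq (by fun_prop)).2 (Continuous.integrableOn_Ioc (by fun_prop))
  have hv2 : MemLp (fun r => exp ((b + 2 * δ) * r) * I r) 2 (volume.restrict (Ioc R s)) :=
    (memLp_two_iff_integrable_sq
      ((hv.mono Ioc_subset_Icc_self).aestronglyMeasurable measurableSet_Ioc)).2
      ((hv.pow 2).integrableOn_Icc.mono_set Ioc_subset_Icc_self)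
  have hcs := sq_integral_mul_le hu2 hv2
  have hsplit : ∀ r, exp (a * r) * (exp ((b + 2 * δ) * r) * I r) = exp (c * r) * I r := by
    intro r; rw [← mul_assoc, ← exp_add, ← hc]; ring_nf
  simp only [hsplit] at hcs
  have hu : ∫ r in Ioc R s, exp (a * r) ^ 2 ≤ exp (2 * a * s) / (2 * a) := by
    simpa only [exp_mul_sq] using setIntegral_exp_mul_Ioc_le (by linarith : 0 < 2 * a) R s
  have hvJ : ∫ r in Ioc R s, (exp ((b + 2 * δ) * r) * I r) ^ 2 ≤
      1 / (2 * b) * ∫ r in Ioc R s, exp (4 * δ * r) * J r := by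
    rw [← integral_const_mul]
    refine setIntegral_mono_on hv2.integrable_sq
      ((ContinuousOn.integrableOn_Icc (by fun_prop)).mono_set Ioc_subset_Icc_self)
      measurableSet_Ioc fun r hr => ?_
    calc (exp ((b + 2 * δ) * r) * I r) ^ 2 = exp (2 * (b + 2 * δ) * r) * I r ^ 2 := by
          rw [mul_pow, exp_mul_sq]
      _ ≤ exp (2 * (b + 2 * δ) * r) * (exp (-2 * b * r) / (2 * b) * J r) := by
          gcongr; exact hIJ r hr
      _ = 1 / (2 * b) * (exp (4 * δ * r) * J r) := by
          rw [show 4 * δ * r = 2 * (b + 2 * δ) * r + -2 * b * r by ring, exp_add]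
          field_simp
  calc _ ≤ _ := hcs
    _ ≤ exp (2 * a * s) / (2 * a) * (1 / (2 * b) * ∫ r in Ioc R s, exp (4 * δ * r) * J r) :=
        mul_le_mul hu hvJ (integral_nonneg fun r => sq_nonneg _) (by positivity)
    _ = _ := by field_simp; ring

theorem exp_mul_sq_le_of_eq_integral {βm βp γ δ R : ℝ} (ha : 0 < γ - βm - δ)
    (hb : 0 < βp - γ - δ) {g : ℝ → ℝ} (hg : Measurable g)
    (hg2 : ∀ r ≥ R, IntegrableOn (fun t => exp (-2 * (γ + δ) * t) * g t ^ 2) (Ici r))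
    {w : ℝ → ℝ} (hw : ∀ s, w s = -exp (βm * s) *
      ∫ r in R..s, exp ((βp - βm) * r) * ∫ t in Ici r, exp (-βp * t) * g t)
    {s : ℝ} (hs : R ≤ s) :
    exp (-2 * γ * s) * w s ^ 2 ≤ exp (-2 * δ * s) / (4 * (γ - βm - δ) * (βp - γ - δ)) *
      ∫ r in R..s, exp (4 * δ * r) * ∫ t in Ici r, exp (-2 * (γ + δ) * t) * g t ^ 2 := by
  have hκ : γ + δ < βp := by linarith
  have hI : ContinuousOn (fun r => ∫ t in Ici r, exp (-βp * t) * g t) (Icc R s) :=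
    ((integrableOn_exp_mul_Ici_of_sq hκ hg (hg2 R le_rfl)).continuousOn_Ici_primitive_Ici).mono
      Icc_subset_Ici_self
  have hJ : ContinuousOn (fun r => ∫ t in Ici r, exp (-2 * (γ + δ) * t) * g t ^ 2) (Icc R s) :=
    (hg2 R le_rfl).continuousOn_Ici_primitive_Ici.mono Icc_subset_Ici_self
  have hK := sq_setIntegral_exp_mul_Ioc_le (δ := δ) (c := βp - βm) ha hb (by ring) hI hJ
    fun r hr => by
      simpa only [sub_add_eq_sub_sub] using sq_setIntegral_exp_mul_Ici_le hκ hg (hg2 r hr.1.le)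
  have hexp : exp (-2 * γ * s) * exp (βm * s) ^ 2 =
      exp (-2 * δ * s) * exp (-(2 * (γ - βm - δ) * s)) := by
    rw [exp_mul_sq, ← exp_add, ← exp_add]; ring_nf
  rw [hw s, intervalIntegral.integral_of_le hs, intervalIntegral.integral_of_le hs]
  set K := ∫ r in Ioc R s, exp ((βp - βm) * r) * ∫ t in Ici r, exp (-βp * t) * g t
  set Q := ∫ r in Ioc R s, exp (4 * δ * r) * ∫ t in Ici r, exp (-2 * (γ + δ) * t) * g t ^ 2
  calc exp (-2 * γ * s) * (-exp (βm * s) * K) ^ 2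
      = exp (-2 * δ * s) * exp (-(2 * (γ - βm - δ) * s)) * K ^ 2 := by rw [← hexp]; ring
    _ ≤ exp (-2 * δ * s) * exp (-(2 * (γ - βm - δ) * s)) *
        (exp (2 * (γ - βm - δ) * s) / (4 * (γ - βm - δ) * (βp - γ - δ)) * Q) := by gcongr
    _ = _ := by rw [exp_neg]; field_simp

theorem setIntegral_Ici_exp_mul_sq_le {γ δ M r : ℝ} (hδ : 0 < δ) {g : ℝ → ℝ}
    (hint : IntegrableOn (fun t => exp (-2 * (γ + δ) * t) * g t ^ 2) (Ici r))
    (hM : ∀ t ≥ r, exp (-γ * t) * |g t| ≤ M) :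
    ∫ t in Ici r, exp (-2 * (γ + δ) * t) * g t ^ 2 ≤ M ^ 2 * (exp (-(2 * δ) * r) / (2 * δ)) := by
  rw [← integral_exp_neg_mul_Ici (by linarith) r, ← integral_const_mul]
  refine setIntegral_mono_on hint ((integrableOn_exp_neg_mul_Ici (by linarith) r).const_mul _)
    measurableSet_Ici fun t ht => ?_
  calc exp (-2 * (γ + δ) * t) * g t ^ 2 = (exp (-γ * t) * |g t|) ^ 2 * exp (-(2 * δ) * t) := by
        rw [mul_pow, sq_abs, exp_mul_sq, mul_right_comm (exp _) (g t ^ 2), ← exp_add]; ring_nf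
    _ ≤ M ^ 2 * exp (-(2 * δ) * t) := by
        gcongr
        exact hM t ht

theorem intervalIntegral_exp_mul_setIntegral_le {γ δ M R s : ℝ} (hδ : 0 < δ) {g : ℝ → ℝ}
    (hg2 : ∀ r ≥ R, IntegrableOn (fun t => exp (-2 * (γ + δ) * t) * g t ^ 2) (Ici r))
    (hM : ∀ t ≥ R, exp (-γ * t) * |g t| ≤ M) (hs : R ≤ s) :
    ∫ r in R..s, exp (4 * δ * r) * ∫ t in Ici r, exp (-2 * (γ + δ) * t) * g t ^ 2 ≤
      M ^ 2 / (2 * δ) * (exp (2 * δ * s) / (2 * δ)) := by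
  have hJ : ContinuousOn (fun r => ∫ t in Ici r, exp (-2 * (γ + δ) * t) * g t ^ 2) (Icc R s) :=
    (hg2 R le_rfl).continuousOn_Ici_primitive_Ici.mono Icc_subset_Ici_self
  rw [intervalIntegral.integral_of_le hs]
  refine le_trans ?_ (mul_le_mul_of_nonneg_left (setIntegral_exp_mul_Ioc_le (by linarith) R s)
    (by positivity))
  rw [← integral_const_mul]
  refine setIntegral_mono_on ((ContinuousOn.integrableOn_Icc (by fun_prop)).mono_set
    Ioc_subset_Icc_self) (Continuous.integrableOn_Ioc (by fun_prop)) measurableSet_Ioc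
    fun r hr => ?_
  calc exp (4 * δ * r) * ∫ t in Ici r, exp (-2 * (γ + δ) * t) * g t ^ 2
      ≤ exp (4 * δ * r) * (M ^ 2 * (exp (-(2 * δ) * r) / (2 * δ))) := by
        gcongr
        exact setIntegral_Ici_exp_mul_sq_le hδ (hg2 r hr.1.le) fun t ht => hM t (hr.1.le.trans ht)
    _ = M ^ 2 / (2 * δ) * exp (2 * δ * r) := by
        rw [show 4 * δ * r = 2 * δ * r + -(-(2 * δ) * r) by ring, exp_add, exp_neg]
        field_simp

open MeasureTheory in
theorem stmt16_general (βm βp γ δ : ℝ)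
    (hγ1 : βm < γ) (hγ2 : γ < βp)
    (hδ : δ = min (βp - γ) (γ - βm) / 2) :
    ∃ C > 0, ∀ (R M : ℝ) (g : ℝ → ℝ), Measurable g →
      (∀ r ≥ R, IntegrableOn (fun t => Real.exp (-2*(γ+δ)*t) * (g t)^2) (Set.Ici r)) →
      (∀ t ≥ R, Real.exp (-γ*t) * |g t| ≤ M) →
      ∀ w : ℝ → ℝ,
        (∀ s, w s = -Real.exp (βm*s) *
          ∫ r in R..s, Real.exp ((βp-βm)*r) * ∫ t in Set.Ici r, Real.exp (-βp*t) * g t) →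
        (∀ s ≥ R, Real.exp (-2*γ*s) * (w s)^2 ≤
          (Real.exp (-2*δ*s) / (4*(γ - βm - δ)*(βp - γ - δ))) *
            ∫ r in R..s, Real.exp (4*δ*r) *
              ∫ t in Set.Ici r, Real.exp (-2*(γ+δ)*t) * (g t)^2) ∧
        ∀ s ≥ R, Real.exp (-γ*s) * |w s| ≤ C * M := by
  have hδ0 : 0 < δ := hδ ▸ half_pos (lt_min (sub_pos.2 hγ2) (sub_pos.2 hγ1))
  have ha : 0 < γ - βm - δ := by rw [hδ]; linarith [min_le_right (βp - γ) (γ - βm)]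
  have hb : 0 < βp - γ - δ := by rw [hδ]; linarith [min_le_left (βp - γ) (γ - βm)]
  have hab : 0 < 4 * (γ - βm - δ) * (βp - γ - δ) := by positivity
  have hsqrt : 0 < √((γ - βm - δ) * (βp - γ - δ)) := by positivity
  refine ⟨1 / (4 * δ * √((γ - βm - δ) * (βp - γ - δ))), by positivity,
    fun R M g hg hg2 hM w hw => ?_⟩
  have hw2 := fun s (hs : s ≥ R) => exp_mul_sq_le_of_eq_integral ha hb hg hg2 hw hs
  refine ⟨hw2, fun s hs => ?_⟩
  have hM0 : 0 ≤ M := (mul_nonneg (exp_pos _).le (abs_nonneg _)).trans (hM R le_rfl)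
  refine (sq_le_sq₀ (by positivity) (by positivity)).1 ?_
  calc (exp (-γ * s) * |w s|) ^ 2 = exp (-2 * γ * s) * w s ^ 2 := by
        rw [mul_pow, sq_abs, exp_mul_sq]; ring_nf
    _ ≤ exp (-2 * δ * s) / (4 * (γ - βm - δ) * (βp - γ - δ)) *
        (M ^ 2 / (2 * δ) * (exp (2 * δ * s) / (2 * δ))) :=
        (hw2 s hs).trans (by gcongr; exact intervalIntegral_exp_mul_setIntegral_le hδ0 hg2 hM hs)
    _ = (1 / (4 * δ * √((γ - βm - δ) * (βp - γ - δ))) * M) ^ 2 := by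
        rw [show -2 * δ * s = -(2 * δ * s) by ring, exp_neg, mul_pow, div_pow, mul_pow, mul_pow,
          sq_sqrt (by positivity)]
        field_simp
        ring

open MeasureTheory in
theorem stmt16 (lam βm βp γ δ : ℝ) (hlam : lam < 1/4)
    (hm : βm^2 + βm + lam = 0) (hp : βp^2 + βp + lam = 0) (hmp : βm < βp)
    (hγ1 : βm < γ) (hγ2 : γ < βp)
    (hδ : δ = min (βp - γ) (γ - βm) / 2) :
    ∃ C > 0, ∀ (R M : ℝ) (g : ℝ → ℝ), Measurable g →
      (∀ r ≥ R, IntegrableOn (fun t => Real.exp (-2*(γ+δ)*t) * (g t)^2) (Set.Ici r)) →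
      (∀ t ≥ R, Real.exp (-γ*t) * |g t| ≤ M) →
      ∀ w : ℝ → ℝ,
        (∀ s, w s = -Real.exp (βm*s) *
          ∫ r in R..s, Real.exp ((βp-βm)*r) * ∫ t in Set.Ici r, Real.exp (-βp*t) * g t) →
        (∀ s ≥ R, Real.exp (-2*γ*s) * (w s)^2 ≤
          (Real.exp (-2*δ*s) / (4*(γ - βm - δ)*(βp - γ - δ))) *
            ∫ r in R..s, Real.exp (4*δ*r) *
              ∫ t in Set.Ici r, Real.exp (-2*(γ+δ)*t) * (g t)^2) ∧
        ∀ s ≥ R, Real.exp (-γ*s) * |w s| ≤ C * M :=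
  stmt16_general βm βp γ δ hγ1 hγ2 hδ
end
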